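/- arXiv:2409.05457 — 6 statements merged into one kernel-verified Lean document; each statement's English description precedes it below -/
import Mathlib

section
/- Let u, v be two distinct top vertices (u drawn above v), B a finite bottom set, and Adj a function assigning to each b ∈ B a nonempty subset Adj(b) ⊆ {u,v}; let k be the number of b ∈ B with Adj(b) = {u,v}. Then the minimum of cr(≺) over all linear orders ≺ on B for which there exists a red-edge selection r satisfying the red-edge constraint equals the minimum of cr(≺) over all linear orders ≺ on B, and both minima equal k·(k−1)/2. (This is Theorem 1: layered AF drawings of an AF with a stable extension of size 2 obtained by solving AFCrossMinREC and by solving AFCrossMin have the same number of total edge crossings.) -/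
/-! Every pair of common neighbors crosses exactly once in any order, which gives the lower bound
`k * (k - 1) / 2`. Placing the `u`-only vertices first, then the common neighbors, then the `v`-only
vertices creates no other crossing, and in that order the red edges chosen as `(u, b)` whenever
`u ∈ Adj b` (and `(v, b)` otherwise) never cross, so the bound is attained under the red-edge
constraint as well. -/

/-- Crossing count of a 2-layer drawing: the number of ordered pairs `(a, b)` of
bottom vertices with `b ≺ a`, `u ∈ Adj a` and `v ∈ Adj b`. -/
noncomputable def crossNum2 {T B : Type} (u v : T) (Adj : B → Set T) (lt : B → B → Prop) : ℕ :=
  {p : B × B | lt p.2 p.1 ∧ u ∈ Adj p.1 ∧ v ∈ Adj p.2}.ncard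

/-- The red-edge constraint: no two red edges cross. -/
def REC2 {T B : Type} (u v : T) (r : B → T) (lt : B → B → Prop) : Prop :=
  ∀ a b : B, a ≠ b →
    ¬ ((r a = u ∧ r b = v ∧ lt b a) ∨ (r a = v ∧ r b = u ∧ lt a b))

open Finset

section PairCount

variable {α : Type*} (r : α → α → Prop) [IsStrictTotalOrder α r]

theorem card_offDiag_filter_mul_two [DecidableEq α] [DecidableRel r] (s : Finset α) :
    #{p ∈ s.offDiag | r p.2 p.1} * 2 = #s * (#s - 1) := by
  have hswap : #{p ∈ s.offDiag | r p.2 p.1} = #{p ∈ s.offDiag | ¬ r p.2 p.1} := by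
    refine card_nbij' Prod.swap Prod.swap ?_ ?_ (fun _ _ => rfl) (fun _ _ => rfl)
    · rintro ⟨a, b⟩ h
      simp only [coe_filter, mem_offDiag, Set.mem_ofPred_eq, Prod.swap_prod_mk] at h ⊢
      exact ⟨⟨h.1.2.1, h.1.1, Ne.symm h.1.2.2⟩, asymm h.2⟩
    · rintro ⟨a, b⟩ h
      simp only [coe_filter, mem_offDiag, Set.mem_ofPred_eq, Prod.swap_prod_mk] at h ⊢
      refine ⟨⟨h.1.2.1, h.1.1, Ne.symm h.1.2.2⟩, ?_⟩
      exact (trichotomous_of r a b).resolve_right (by rintro (rfl | hba) <;> tauto)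
  have hsplit := card_filter_add_card_filter_not (s := s.offDiag) (fun p => r p.2 p.1)
  rw [offDiag_card, ← hswap] at hsplit
  rw [Nat.mul_sub_one]
  omega

theorem ncard_pairs_eq (S : Set α) (hS : S.Finite) :
    {p : α × α | p.1 ∈ S ∧ p.2 ∈ S ∧ r p.2 p.1}.ncard = S.ncard * (S.ncard - 1) / 2 := by
  classical
  obtain ⟨s, rfl⟩ := hS.exists_finset_coe
  have hpairs : {p : α × α | p.1 ∈ (s : Set α) ∧ p.2 ∈ (s : Set α) ∧ r p.2 p.1}
      = ↑{p ∈ s.offDiag | r p.2 p.1} := by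
    ext ⟨a, b⟩
    simp only [Set.mem_ofPred_eq, mem_coe, coe_filter, mem_offDiag, and_assoc]
    exact ⟨fun ⟨ha, hb, h⟩ => ⟨ha, hb, fun hab => irrefl b (hab ▸ h), h⟩,
      fun ⟨ha, hb, _, h⟩ => ⟨ha, hb, h⟩⟩
  rw [hpairs, Set.ncard_coe_finset, Set.ncard_coe_finset]
  have := card_offDiag_filter_mul_two r s
  omega

end PairCount

theorem exists_isStrictTotalOrder_rank_le {B β : Type*} [LinearOrder β] (ρ : B → β) :
    ∃ lt : B → B → Prop, IsStrictTotalOrder B lt ∧ ∀ a b, lt a b → ρ a ≤ ρ b := by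
  let f : B → β ×ₗ Cardinal := fun b => toLex (ρ b, embeddingToCardinal b)
  have hf : f.Injective := fun a b h =>
    embeddingToCardinal.injective (congrArg Prod.snd (toLex.injective h))
  exact ⟨Function.onFun (· < ·) f, hf.isStrictTotalOrder_onFun (r := (· < ·)), fun a b h =>
    (Prod.Lex.toLex_lt_toLex'.1 h).1⟩

section TwoLayer

variable {T B : Type} (u v : T) (Adj : B → Set T)

open Classical in
/-- Layers of an optimal order: `u`-only vertices, then common neighbors, then `v`-only vertices. -/
noncomputable def layerRank (b : B) : ℕ :=
  if u ∈ Adj b then (if v ∈ Adj b then 1 else 0) else 2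

open Classical in
noncomputable def redChoice (b : B) : T :=
  if u ∈ Adj b then u else v

variable {u v Adj}

theorem adj_eq_pair_iff {b : B} (hsub : Adj b ⊆ {u, v}) :
    Adj b = {u, v} ↔ u ∈ Adj b ∧ v ∈ Adj b :=
  ⟨fun h => by simp [h], fun ⟨hu, hv⟩ =>
    hsub.antisymm (Set.insert_subset hu (Set.singleton_subset_iff.2 hv))⟩

theorem redChoice_mem (hsub : ∀ b, Adj b ⊆ {u, v}) (hne : ∀ b, (Adj b).Nonempty) (b : B) :
    redChoice u v Adj b ∈ Adj b := by
  unfold redChoice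
  split_ifs with hu
  · exact hu
  · obtain ⟨x, hx⟩ := hne b
    rcases hsub b hx with rfl | rfl
    · exact absurd hx hu
    · exact hx

theorem mem_of_redChoice_eq (huv : u ≠ v) {b : B} (h : redChoice u v Adj b = u) : u ∈ Adj b := by
  unfold redChoice at h
  split_ifs at h with hu
  exacts [hu, absurd h.symm huv]

theorem layerRank_le_one {b : B} (hu : u ∈ Adj b) : layerRank u v Adj b ≤ 1 := by
  unfold layerRank; split_ifs <;> omega

theorem one_le_layerRank {b : B} (hv : v ∈ Adj b) : 1 ≤ layerRank u v Adj b := by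
  unfold layerRank; split_ifs <;> omega

theorem layerRank_eq_one {b : B} (h : layerRank u v Adj b = 1) : u ∈ Adj b ∧ v ∈ Adj b := by
  unfold layerRank at h; split_ifs at h with hu hv <;> first | exact ⟨hu, hv⟩ | omega

theorem layerRank_eq_two_of_redChoice_eq (huv : u ≠ v) {b : B} (h : redChoice u v Adj b = v) :
    layerRank u v Adj b = 2 := by
  unfold redChoice at h; unfold layerRank
  split_ifs at h ⊢ <;> first | rfl | exact absurd h huv

theorem ncard_commonPairs_le_crossNum2 [Finite B] (lt : B → B → Prop) :
    {p : B × B | (u ∈ Adj p.1 ∧ v ∈ Adj p.1) ∧ (u ∈ Adj p.2 ∧ v ∈ Adj p.2) ∧ lt p.2 p.1}.ncard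
      ≤ crossNum2 u v Adj lt :=
  Set.ncard_le_ncard (fun _ ⟨h1, h2, h⟩ => ⟨h, h1.1, h2.2⟩) (Set.toFinite _)

variable {lt : B → B → Prop}

theorem crossNum2_eq_of_layerRank_le
    (hlt : ∀ a b, lt a b → layerRank u v Adj a ≤ layerRank u v Adj b) :
    crossNum2 u v Adj lt = {p : B × B |
      (u ∈ Adj p.1 ∧ v ∈ Adj p.1) ∧ (u ∈ Adj p.2 ∧ v ∈ Adj p.2) ∧ lt p.2 p.1}.ncard := by
  unfold crossNum2
  congr 1
  ext ⟨a, b⟩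
  simp only [Set.mem_ofPred_eq]
  refine ⟨fun ⟨h, hu, hv⟩ => ?_, fun ⟨ha, hb, h⟩ => ⟨h, ha.1, hb.2⟩⟩
  have := hlt b a h
  have := layerRank_le_one (v := v) hu
  have := one_le_layerRank (u := u) (Adj := Adj) hv
  exact ⟨layerRank_eq_one (by omega), layerRank_eq_one (by omega), h⟩

theorem rec2_redChoice_of_layerRank_le (huv : u ≠ v)
    (hlt : ∀ a b, lt a b → layerRank u v Adj a ≤ layerRank u v Adj b) :
    REC2 u v (redChoice u v Adj) lt := by
  have key : ∀ a b, redChoice u v Adj a = u → redChoice u v Adj b = v → ¬ lt b a := by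
    intro a b ha hb h
    have := hlt b a h
    have := layerRank_eq_two_of_redChoice_eq huv hb
    have := layerRank_le_one (v := v) (mem_of_redChoice_eq huv ha)
    omega
  rintro a b - (⟨ha, hb, h⟩ | ⟨ha, hb, h⟩)
  exacts [key a b ha hb h, key b a hb ha h]

end TwoLayer

/-- Theorem 1: for an AF with a stable extension of size two (modelled as a 2-layer
drawing whose top layer consists of `u` above `v` and whose bottom set is `B`),
the minimum number of crossings over orders admitting a red-edge selection
satisfying the red-edge constraint (AFCrossMinREC) equals the minimum number of
crossings over all orders (AFCrossMin), and both equal `k * (k - 1) / 2` where `k`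
is the number of common neighbors. -/
theorem stmt0 {T B : Type} [Fintype B] (u v : T) (huv : u ≠ v)
    (Adj : B → Set T) (hsub : ∀ b, Adj b ⊆ {u, v}) (hne : ∀ b, (Adj b).Nonempty)
    (k : ℕ) (hk : k = {b : B | Adj b = {u, v}}.ncard) :
    sInf {n : ℕ | ∃ lt : B → B → Prop, IsStrictTotalOrder B lt ∧
        (∃ r : B → T, (∀ b, r b ∈ Adj b) ∧ REC2 u v r lt) ∧
        crossNum2 u v Adj lt = n}
      = sInf {n : ℕ | ∃ lt : B → B → Prop, IsStrictTotalOrder B lt ∧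
          crossNum2 u v Adj lt = n} ∧
    sInf {n : ℕ | ∃ lt : B → B → Prop, IsStrictTotalOrder B lt ∧
        (∃ r : B → T, (∀ b, r b ∈ Adj b) ∧ REC2 u v r lt) ∧
        crossNum2 u v Adj lt = n}
      = k * (k - 1) / 2 ∧
    sInf {n : ℕ | ∃ lt : B → B → Prop, IsStrictTotalOrder B lt ∧
        crossNum2 u v Adj lt = n}
      = k * (k - 1) / 2 := by
  have hcommon : {b : B | Adj b = {u, v}} = {b | u ∈ Adj b ∧ v ∈ Adj b} :=
    Set.ext fun b => adj_eq_pair_iff (hsub b)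
  have hpairs : ∀ lt, IsStrictTotalOrder B lt →
      {p : B × B | (u ∈ Adj p.1 ∧ v ∈ Adj p.1) ∧ (u ∈ Adj p.2 ∧ v ∈ Adj p.2) ∧ lt p.2 p.1}.ncard
        = k * (k - 1) / 2 := fun lt _ => by
    rw [hk, hcommon]
    exact ncard_pairs_eq lt _ (Set.toFinite {b | u ∈ Adj b ∧ v ∈ Adj b})
  have hlower : ∀ lt, IsStrictTotalOrder B lt → k * (k - 1) / 2 ≤ crossNum2 u v Adj lt :=
    fun lt hlt => hpairs lt hlt ▸ ncard_commonPairs_le_crossNum2 lt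
  obtain ⟨lt₀, hlt₀, hrank⟩ := exists_isStrictTotalOrder_rank_le (layerRank u v Adj)
  have hcr₀ : crossNum2 u v Adj lt₀ = k * (k - 1) / 2 :=
    (crossNum2_eq_of_layerRank_le hrank).trans (hpairs lt₀ hlt₀)
  have hREC : sInf {n : ℕ | ∃ lt : B → B → Prop, IsStrictTotalOrder B lt ∧
      (∃ r : B → T, (∀ b, r b ∈ Adj b) ∧ REC2 u v r lt) ∧
      crossNum2 u v Adj lt = n} = k * (k - 1) / 2 :=
    IsLeast.csInf_eq ⟨⟨lt₀, hlt₀, ⟨redChoice u v Adj, redChoice_mem hsub hne,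
      rec2_redChoice_of_layerRank_le huv hrank⟩, hcr₀⟩,
      by rintro _ ⟨lt, hlt, -, rfl⟩; exact hlower lt hlt⟩
  have hAll : sInf {n : ℕ | ∃ lt : B → B → Prop, IsStrictTotalOrder B lt ∧
      crossNum2 u v Adj lt = n} = k * (k - 1) / 2 :=
    IsLeast.csInf_eq ⟨⟨lt₀, hlt₀, hcr₀⟩, by rintro _ ⟨lt, hlt, rfl⟩; exact hlower lt hlt⟩
  exact ⟨hREC.trans hAll.symm, hREC, hAll⟩
end

section
/- Let u, v be two distinct top vertices (u drawn above v), B a finite bottom set, and Adj a function assigning to each b ∈ B a subset Adj(b) ⊆ {u,v}; let k be the number of b ∈ B with Adj(b) = {u,v}. Then for every linear order ≺ on B, cr(≺) ≥ k·(k−1)/2. -/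
open Finset

theorem Finset.card_filter_product_rel_eq_choose_two {α : Type*} (r : α → α → Prop)
    [IsStrictTotalOrder α r] [DecidableRel r] (s : Finset α) :
    #{p ∈ s ×ˢ s | r p.1 p.2} = (#s).choose 2 := by
  -- swapping matches the off-diagonal pairs ordered by `r` with those that are not
  have hswap : #{p ∈ s.offDiag | ¬r p.1 p.2} = #{p ∈ s.offDiag | r p.1 p.2} := by
    refine card_bij (fun p _ => p.swap) ?_ (fun p _ q _ h => Prod.swap_injective h) ?_
    · intro p hp
      simp only [mem_filter, mem_offDiag, Prod.fst_swap, Prod.snd_swap] at hp ⊢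
      exact ⟨⟨hp.1.2.1, hp.1.1, Ne.symm hp.1.2.2⟩,
        (trichotomous_of r p.1 p.2).resolve_left hp.2 |>.resolve_left hp.1.2.2⟩
    · intro p hp
      simp only [mem_filter, mem_offDiag] at hp
      refine ⟨p.swap, ?_, rfl⟩
      simp only [mem_filter, mem_offDiag, Prod.fst_swap, Prod.snd_swap]
      exact ⟨⟨hp.1.2.1, hp.1.1, Ne.symm hp.1.2.2⟩, asymm hp.2⟩
  have hdiag : {p ∈ s ×ˢ s | r p.1 p.2} = {p ∈ s.offDiag | r p.1 p.2} := by
    ext p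
    simp only [mem_filter, mem_product, mem_offDiag]
    exact ⟨fun h => ⟨⟨h.1.1, h.1.2, ne_of_irrefl h.2⟩, h.2⟩,
      fun h => ⟨⟨h.1.1, h.1.2.1⟩, h.2⟩⟩
  have htotal := card_filter_add_card_filter_not (s := s.offDiag) (fun p => r p.1 p.2)
  rw [hswap, offDiag_card] at htotal
  rw [hdiag, Nat.choose_two_right]
  have : #s * #s - #s = #s * (#s - 1) := by rw [Nat.mul_sub_one]
  omega

theorem choose_two_le_crossNum2 {T B : Type} [Finite B] (u v : T) (Adj : B → Set T)
    (lt : B → B → Prop) [IsStrictTotalOrder B lt] (s : Finset B)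
    (hs : ∀ b ∈ s, u ∈ Adj b ∧ v ∈ Adj b) :
    (#s).choose 2 ≤ crossNum2 u v Adj lt := by
  classical
  rw [← card_filter_product_rel_eq_choose_two lt s, crossNum2,
    ← Set.ncard_coe_finset]
  refine Set.ncard_le_ncard_of_injOn Prod.swap ?_ Prod.swap_injective.injOn (Set.toFinite _)
  intro p hp
  simp only [coe_filter, mem_product, Set.mem_ofPred_eq] at hp
  exact ⟨hp.2, (hs _ hp.1.2).1, (hs _ hp.1.1).2⟩

theorem stmt1_general {T B : Type} [Fintype B] (u v : T)
    (Adj : B → Set T)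
    (k : ℕ) (hk : k = {b : B | Adj b = {u, v}}.ncard)
    (lt : B → B → Prop) (hlt : IsStrictTotalOrder B lt) :
    crossNum2 u v Adj lt ≥ k * (k - 1) / 2 := by
  classical
  rw [← Nat.choose_two_right, hk, Set.ncard_eq_toFinset_card']
  refine choose_two_le_crossNum2 u v Adj lt _ fun b hb => ?_
  rw [Set.mem_toFinset, Set.mem_ofPred_eq] at hb
  simp [hb]

/-- Lower bound: every linear order on the bottom layer incurs at least
`k * (k - 1) / 2` crossings, where `k` is the number of common neighbors of the
two top vertices `u` and `v`. -/
theorem stmt1 {T B : Type} [Fintype B] (u v : T) (huv : u ≠ v)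
    (Adj : B → Set T) (hsub : ∀ b, Adj b ⊆ {u, v})
    (k : ℕ) (hk : k = {b : B | Adj b = {u, v}}.ncard)
    (lt : B → B → Prop) (hlt : IsStrictTotalOrder B lt) :
    crossNum2 u v Adj lt ≥ k * (k - 1) / 2 :=
  stmt1_general u v Adj k hk lt hlt
end

section
/- Let u, v, w be three distinct top vertices drawn in this order from top to bottom, B a finite bottom set, and Adj a function assigning to each b ∈ B a subset Adj(b) ⊆ {u,v,w}. Let a ∈ B satisfy u ∈ Adj(a) and w ∈ Adj(a). Then for every linear order ≺ on B and every b ∈ B with b ≠ a and v ∈ Adj(b), the edge (v,b) crosses the edge (u,a) or the edge (w,a). Consequently, for every linear order ≺ on B, the number of crossing edge pairs in which one edge is incident to a is at least the number of b ∈ B with b ≠ a and v ∈ Adj(b). -/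
/-!
Since `a` is joined to the topmost and the bottommost top vertex, every edge `(v, b)` with
`b ≠ a` crosses one of them: `(u, a)` if `b ≺ a`, and `(w, a)` if `a ≺ b`. Assigning to each
such `b` the crossing `((u or w, a), (v, b))` is injective, which gives the count.
-/

/-- `Above u v w s t` says that top vertex `s` is drawn above top vertex `t`,
where the top layer consists of `u`, `v`, `w` drawn in this order from top to
bottom. -/
def Above {T : Type} (u v w : T) (s t : T) : Prop :=
  (s = u ∧ t = v) ∨ (s = u ∧ t = w) ∨ (s = v ∧ t = w)

theorem Above.mem_left {T : Type} {u v w s t : T} (h : Above u v w s t) :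
    s ∈ ({u, v, w} : Set T) := by
  rcases h with ⟨rfl, -⟩ | ⟨rfl, -⟩ | ⟨rfl, -⟩ <;> simp

theorem Above.mem_right {T : Type} {u v w s t : T} (h : Above u v w s t) :
    t ∈ ({u, v, w} : Set T) := by
  rcases h with ⟨-, rfl⟩ | ⟨-, rfl⟩ | ⟨-, rfl⟩ <;> simp

section Crossings

variable {T B : Type} (u v w : T) (Adj : B → Set T) (a : B) (lt : B → B → Prop)

/-- The crossings `((s, a), (t, b))` with an edge at `a`, encoded as triples `(s, t, b)`. -/
def crossingsAt : Set (T × T × B) :=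
  {q | q.1 ∈ Adj a ∧ q.2.1 ∈ Adj q.2.2 ∧ q.2.2 ≠ a ∧
    ((Above u v w q.1 q.2.1 ∧ lt q.2.2 a) ∨ (Above u v w q.2.1 q.1 ∧ lt a q.2.2))}

/-- Crossing edges have their top ends among `u`, `v`, `w`, whatever the sets `Adj b` are. -/
theorem crossingsAt_finite [Finite B] : (crossingsAt u v w Adj a lt).Finite := by
  refine (Set.toFinite ({u, v, w} ×ˢ {u, v, w} ×ˢ Set.univ)).subset ?_
  rintro ⟨s, t, b⟩ ⟨-, -, -, ⟨h, -⟩ | ⟨h, -⟩⟩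
  · exact ⟨h.mem_left, h.mem_right, trivial⟩
  · exact ⟨h.mem_right, h.mem_left, trivial⟩

variable {u v w a lt}

theorem edge_middle_crosses_outer [Std.Trichotomous lt] {b : B} (hb : b ≠ a) :
    ((Above u v w u v ∧ lt b a) ∨ (Above u v w v u ∧ lt a b)) ∨
      ((Above u v w w v ∧ lt b a) ∨ (Above u v w v w ∧ lt a b)) := by
  rcases trichotomous_of lt b a with h | h | h
  · exact .inl (.inl ⟨.inl ⟨rfl, rfl⟩, h⟩)
  · exact absurd h hb
  · exact .inr (.inr ⟨.inr (.inr ⟨rfl, rfl⟩), h⟩)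

open scoped Classical in
theorem mk_mem_crossingsAt [Std.Trichotomous lt] (hau : u ∈ Adj a) (haw : w ∈ Adj a)
    {b : B} (hb : b ≠ a) (hvb : v ∈ Adj b) :
    (if lt b a then u else w, v, b) ∈ crossingsAt u v w Adj a lt := by
  split_ifs with hba
  · exact ⟨hau, hvb, hb, .inl ⟨.inl ⟨rfl, rfl⟩, hba⟩⟩
  · have hab : lt a b := ((trichotomous_of lt b a).resolve_left hba).resolve_left hb
    exact ⟨haw, hvb, hb, .inr ⟨.inr (.inr ⟨rfl, rfl⟩), hab⟩⟩

open scoped Classical in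
theorem ncard_le_ncard_crossingsAt [Finite B] [Std.Trichotomous lt]
    (hau : u ∈ Adj a) (haw : w ∈ Adj a) :
    {b : B | b ≠ a ∧ v ∈ Adj b}.ncard ≤ (crossingsAt u v w Adj a lt).ncard :=
  Set.ncard_le_ncard_of_injOn (fun b => (if lt b a then u else w, v, b))
    (fun _ hb => mk_mem_crossingsAt Adj hau haw hb.1 hb.2)
    (fun _ _ _ _ h => congrArg (fun q => q.2.2) h) (crossingsAt_finite u v w Adj a lt)

end Crossings

theorem stmt5_general {T B : Type} [Fintype B] (u v w : T)
    (Adj : B → Set T)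
    (a : B) (hau : u ∈ Adj a) (haw : w ∈ Adj a)
    (lt : B → B → Prop) (hlt : IsStrictTotalOrder B lt) :
    (∀ b : B, b ≠ a → v ∈ Adj b →
      ((Above u v w u v ∧ lt b a) ∨ (Above u v w v u ∧ lt a b)) ∨
      ((Above u v w w v ∧ lt b a) ∨ (Above u v w v w ∧ lt a b))) ∧
    {q : T × T × B | q.1 ∈ Adj a ∧ q.2.1 ∈ Adj q.2.2 ∧ q.2.2 ≠ a ∧
        ((Above u v w q.1 q.2.1 ∧ lt q.2.2 a) ∨
         (Above u v w q.2.1 q.1 ∧ lt a q.2.2))}.ncard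
      ≥ {b : B | b ≠ a ∧ v ∈ Adj b}.ncard :=
  ⟨fun _ hb _ => edge_middle_crosses_outer hb, ncard_le_ncard_crossingsAt Adj hau haw⟩

/-- If `a` is a bottom vertex adjacent to both `u` and `w`, then for every linear
order `≺` on the bottom layer, every edge `(v, b)` with `b ≠ a` crosses the edge
`(u, a)` or the edge `(w, a)`.  Consequently, the number of crossing edge pairs in
which one edge is incident to `a` (counted as triples `(s, t, b)` with `s ∈ Adj a`,
`t ∈ Adj b`, `b ≠ a` and the edges `(s, a)` and `(t, b)` crossing) is at least the
number of `b ≠ a` with `v ∈ Adj b`. -/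
theorem stmt5 {T B : Type} [Fintype B] (u v w : T)
    (huv : u ≠ v) (huw : u ≠ w) (hvw : v ≠ w)
    (Adj : B → Set T) (hsub : ∀ b, Adj b ⊆ {u, v, w})
    (a : B) (hau : u ∈ Adj a) (haw : w ∈ Adj a)
    (lt : B → B → Prop) (hlt : IsStrictTotalOrder B lt) :
    (∀ b : B, b ≠ a → v ∈ Adj b →
      ((Above u v w u v ∧ lt b a) ∨ (Above u v w v u ∧ lt a b)) ∨
      ((Above u v w w v ∧ lt b a) ∨ (Above u v w v w ∧ lt a b))) ∧
    {q : T × T × B | q.1 ∈ Adj a ∧ q.2.1 ∈ Adj q.2.2 ∧ q.2.2 ≠ a ∧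
        ((Above u v w q.1 q.2.1 ∧ lt q.2.2 a) ∨
         (Above u v w q.2.1 q.1 ∧ lt a q.2.2))}.ncard
      ≥ {b : B | b ≠ a ∧ v ∈ Adj b}.ncard :=
  stmt5_general u v w Adj a hau haw lt hlt
end

section
/- Let u, v, w be three distinct top vertices drawn in this order from top to bottom, B a finite bottom set, and Adj a function assigning to each b ∈ B a nonempty subset Adj(b) ⊆ {u,v,w} with |Adj(b)| ≤ 2 for all b, such that exactly one vertex a ∈ B has Adj(a) = {u,w}. Let k_uv = |{b ∈ B : Adj(b) = {u,v}}|, k_vw = |{b ∈ B : Adj(b) = {v,w}}|, and m = |{b ∈ B : v ∈ Adj(b)}|. Then there exists a linear order ≺ on B with cr(≺) ≤ k_uv·(k_uv−1)/2 + k_vw·(k_vw−1)/2 + m. -/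
/-- Crossing count of a 2-layer drawing with top layer `u, v, w` (top to bottom):
the number of unordered pairs of edges that cross, counted via the ordered pairs
of edges `((s,a),(t,b))` with `s ∈ Adj a`, `t ∈ Adj b`, `s` drawn above `t` and
`b ≺ a`. -/
noncomputable def crossNum3 {T B : Type} (u v w : T) (Adj : B → Set T)
    (lt : B → B → Prop) : ℕ :=
  {q : (T × B) × (T × B) | q.1.1 ∈ Adj q.1.2 ∧ q.2.1 ∈ Adj q.2.2 ∧
    Above u v w q.1.1 q.2.1 ∧ lt q.2.2 q.1.2}.ncard

theorem Set.ncard_rel_pairs_le_choose_two {α : Type*} {r : α → α → Prop} [Std.Asymm r]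
    {P : Set α} (hP : P.Finite) :
    {p : α × α | p.1 ∈ P ∧ p.2 ∈ P ∧ r p.2 p.1}.ncard ≤ P.ncard.choose 2 := by
  classical
  calc _ ≤ (↑(hP.toFinset.offDiag.image Sym2.mk.uncurry) : Set (Sym2 α)).ncard := by
        refine Set.ncard_le_ncard_of_injOn Sym2.mk.uncurry ?_ ?_
        · rintro p ⟨h1, h2, hr⟩
          exact Finset.mem_image_of_mem _ (Finset.mem_offDiag.2
            ⟨hP.mem_toFinset.2 h1, hP.mem_toFinset.2 h2, fun h => irrefl_of r p.1 (h ▸ hr)⟩)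
        · rintro p ⟨-, -, hp⟩ q ⟨-, -, hq⟩ hpq
          refine (Sym2.mk_eq_mk_iff.1 hpq).resolve_right fun h => asymm hp ?_
          rwa [h]
    _ = P.ncard.choose 2 := by
        rw [Set.ncard_coe_finset, Sym2.card_image_offDiag, Set.ncard_eq_toFinset_card P hP]

theorem exists_isStrictTotalOrder_monotone {B α : Type*} [Finite B] [LinearOrder α]
    (f : B → α) : ∃ lt : B → B → Prop, IsStrictTotalOrder B lt ∧ ∀ x y, lt x y → f x ≤ f y := by
  obtain ⟨n, ⟨e⟩⟩ := Finite.exists_equiv_fin B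
  let key : B → α ×ₗ Fin n := fun b => toLex (f b, e b)
  have hkey : Function.Injective key := fun x y h => e.injective (congrArg (·.2) h)
  let := LinearOrder.lift' key hkey
  exact ⟨(· < ·), inferInstance, fun x y h => (Prod.Lex.toLex_lt_toLex'.1 h).1⟩

section NbhdRank

variable {T : Type*} {u v w : T} {S : Set T}

open Classical in
/-- Position of a neighbourhood in the order `{u} < {u,v} < {u,w} < {v} < {v,w} < {w}`
(ranks `0, …, 5`); the empty set gets rank `3`. -/
noncomputable def nbhdRank (u v w : T) (S : Set T) : ℕ :=
  if u ∈ S then (if v ∈ S then 1 else if w ∈ S then 2 else 0)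
  else if w ∈ S then (if v ∈ S then 4 else 5) else 3

theorem not_mem_all_of_ncard_le_two (hS : S ⊆ {u, v, w}) (h2 : S.ncard ≤ 2)
    (huv : u ≠ v) (huw : u ≠ w) (hvw : v ≠ w) : ¬ (u ∈ S ∧ v ∈ S ∧ w ∈ S) := by
  rintro ⟨hu, hv, hw⟩
  have : S = {u, v, w} := hS.antisymm (by simp [Set.insert_subset_iff, hu, hv, hw])
  rw [this, Set.ncard_insert_of_notMem (by simp [huv, huw]), Set.ncard_pair hvw] at h2
  omega

theorem nbhdRank_le_two_of_mem_left (hu : u ∈ S) : nbhdRank u v w S ≤ 2 := by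
  unfold nbhdRank; split_ifs <;> omega

theorem nbhdRank_of_mem_middle (hv : v ∈ S) :
    nbhdRank u v w S = 1 ∨ nbhdRank u v w S = 3 ∨ nbhdRank u v w S = 4 := by
  unfold nbhdRank; split_ifs <;> simp_all

theorem nbhdRank_of_mem_right (h3 : ¬ (u ∈ S ∧ v ∈ S ∧ w ∈ S)) (hw : w ∈ S) :
    nbhdRank u v w S = 2 ∨ nbhdRank u v w S = 4 ∨ nbhdRank u v w S = 5 := by
  unfold nbhdRank; split_ifs <;> simp_all

theorem eq_pair_of_nbhdRank_eq_one (hS : S ⊆ {u, v, w}) (h3 : ¬ (u ∈ S ∧ v ∈ S ∧ w ∈ S))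
    (h : nbhdRank u v w S = 1) : S = {u, v} := by
  unfold nbhdRank at h
  split_ifs at h with hu hv <;> try omega
  refine Set.Subset.antisymm (fun x hx => ?_) (by simp [Set.insert_subset_iff, hu, hv])
  rcases hS hx with rfl | rfl | rfl <;> simp_all

theorem eq_pair_of_nbhdRank_eq_two (hS : S ⊆ {u, v, w}) (h : nbhdRank u v w S = 2) :
    S = {u, w} := by
  unfold nbhdRank at h
  split_ifs at h with hu hv hw <;> try omega
  refine Set.Subset.antisymm (fun x hx => ?_) (by simp [Set.insert_subset_iff, hu, hw])
  rcases hS hx with rfl | rfl | rfl <;> simp_all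

theorem eq_pair_of_nbhdRank_eq_four (hS : S ⊆ {u, v, w}) (h : nbhdRank u v w S = 4) :
    S = {v, w} := by
  unfold nbhdRank at h
  split_ifs at h with hu _ _ hw hv <;> try omega
  refine Set.Subset.antisymm (fun x hx => ?_) (by simp [Set.insert_subset_iff, hv, hw])
  rcases hS hx with rfl | rfl | rfl <;> simp_all

end NbhdRank

section Crossings

variable {T B : Type} {u v w : T} {Adj : B → Set T}

theorem crossing_cases_of_monotone_nbhdRank (huv : u ≠ v) (huw : u ≠ w) (hvw : v ≠ w)
    (hsub : ∀ b, Adj b ⊆ {u, v, w}) (hdeg : ∀ b, (Adj b).ncard ≤ 2)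
    {a : B} (ha_unique : ∀ b, Adj b = {u, w} → b = a)
    {lt : B → B → Prop} [Std.Irrefl lt]
    (hmono : ∀ x y, lt x y → nbhdRank u v w (Adj x) ≤ nbhdRank u v w (Adj y))
    {s t : T} {x y : B} (hs : s ∈ Adj x) (ht : t ∈ Adj y) (hst : Above u v w s t)
    (hyx : lt y x) :
    (s = u ∧ t = v ∧ (x = a ∨ Adj x = {u, v} ∧ Adj y = {u, v})) ∨
      (s = v ∧ t = w ∧ (y = a ∨ Adj x = {v, w} ∧ Adj y = {v, w})) := by
  have hle := hmono y x hyx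
  have h3 b := not_mem_all_of_ncard_le_two (hsub b) (hdeg b) huv huw hvw
  have rank_two b (h : nbhdRank u v w (Adj b) = 2) : b = a :=
    ha_unique b (eq_pair_of_nbhdRank_eq_two (hsub b) h)
  rcases hst with ⟨hsu, htv⟩ | ⟨hsu, htw⟩ | ⟨hsv, htw⟩
  · subst s t
    have hx := nbhdRank_le_two_of_mem_left (v := v) (w := w) hs
    have hy := nbhdRank_of_mem_middle (u := u) (w := w) ht
    refine Or.inl ⟨rfl, rfl, ?_⟩
    by_cases hx2 : nbhdRank u v w (Adj x) = 2
    · exact Or.inl (rank_two x hx2)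
    · exact Or.inr ⟨eq_pair_of_nbhdRank_eq_one (hsub x) (h3 x) (by omega),
        eq_pair_of_nbhdRank_eq_one (hsub y) (h3 y) (by omega)⟩
  · -- both bottom vertices would have rank 2, so both would be `a`
    subst s t
    have hx := nbhdRank_le_two_of_mem_left (v := v) (w := w) hs
    have hy := nbhdRank_of_mem_right (h3 y) ht
    have : y = x := (rank_two y (by omega)).trans (rank_two x (by omega)).symm
    exact absurd (this ▸ hyx) (irrefl x)
  · subst s t
    have hx := nbhdRank_of_mem_middle (u := u) (w := w) hs
    have hy := nbhdRank_of_mem_right (h3 y) ht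
    refine Or.inr ⟨rfl, rfl, ?_⟩
    by_cases hy2 : nbhdRank u v w (Adj y) = 2
    · exact Or.inl (rank_two y hy2)
    · exact Or.inr ⟨eq_pair_of_nbhdRank_eq_four (hsub x) (by omega),
        eq_pair_of_nbhdRank_eq_four (hsub y) (by omega)⟩

theorem crossNum3_le_of_crossing_cases [Finite B] {lt : B → B → Prop} [Std.Asymm lt] (a : B)
    (hcases : ∀ s t x y, s ∈ Adj x → t ∈ Adj y → Above u v w s t → lt y x →
      (s = u ∧ t = v ∧ (x = a ∨ Adj x = {u, v} ∧ Adj y = {u, v})) ∨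
        (s = v ∧ t = w ∧ (y = a ∨ Adj x = {v, w} ∧ Adj y = {v, w}))) :
    crossNum3 u v w Adj lt ≤ {b | Adj b = {u, v}}.ncard.choose 2 +
      {b | Adj b = {v, w}}.ncard.choose 2 + {b | v ∈ Adj b}.ncard := by
  classical
  let pairs (S : Set T) : Set (B × B) :=
    {p | p.1 ∈ {b | Adj b = S} ∧ p.2 ∈ {b | Adj b = S} ∧ lt p.2 p.1}
  let edgePair (s t : T) (p : B × B) : (T × B) × (T × B) := ((s, p.1), (t, p.2))
  -- a crossing at `a` is determined by its other bottom vertex, a neighbour of `v`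
  let atA (b : B) : (T × B) × (T × B) := if lt b a then ((u, a), (v, b)) else ((v, b), (w, a))
  have hcover : {q : (T × B) × (T × B) | q.1.1 ∈ Adj q.1.2 ∧ q.2.1 ∈ Adj q.2.2 ∧
      Above u v w q.1.1 q.2.1 ∧ lt q.2.2 q.1.2} ⊆
      edgePair u v '' pairs {u, v} ∪ edgePair v w '' pairs {v, w} ∪ atA '' {b | v ∈ Adj b} := by
    rintro ⟨⟨s, x⟩, ⟨t, y⟩⟩ ⟨hs, ht, hst, hyx⟩
    rcases hcases s t x y hs ht hst hyx with
      ⟨rfl, rfl, rfl | ⟨hx, hy⟩⟩ | ⟨rfl, rfl, rfl | ⟨hx, hy⟩⟩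
    · exact Or.inr ⟨y, ht, if_pos hyx⟩
    · exact Or.inl (Or.inl ⟨(x, y), ⟨hx, hy, hyx⟩, rfl⟩)
    · exact Or.inr ⟨x, hs, if_neg (asymm hyx)⟩
    · exact Or.inl (Or.inr ⟨(x, y), ⟨hx, hy, hyx⟩, rfl⟩)
  calc crossNum3 u v w Adj lt
      ≤ (edgePair u v '' pairs {u, v}).ncard + (edgePair v w '' pairs {v, w}).ncard +
          (atA '' {b | v ∈ Adj b}).ncard := by
        refine (Set.ncard_le_ncard hcover).trans ?_
        grw [Set.ncard_union_le, Set.ncard_union_le]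
    _ ≤ (pairs {u, v}).ncard + (pairs {v, w}).ncard + {b | v ∈ Adj b}.ncard := by
        gcongr <;> exact Set.ncard_image_le
    _ ≤ _ := by
        gcongr <;> exact Set.ncard_rel_pairs_le_choose_two (Set.toFinite _)

end Crossings

theorem stmt6_general {T B : Type} [Fintype B] (u v w : T)
    (huv : u ≠ v) (huw : u ≠ w) (hvw : v ≠ w)
    (Adj : B → Set T) (hsub : ∀ b, Adj b ⊆ {u, v, w})
    (hdeg : ∀ b, (Adj b).ncard ≤ 2)
    (ha : ∃! a : B, Adj a = {u, w})
    (kuv kvw m : ℕ)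
    (hkuv : kuv = {b : B | Adj b = {u, v}}.ncard)
    (hkvw : kvw = {b : B | Adj b = {v, w}}.ncard)
    (hm : m = {b : B | v ∈ Adj b}.ncard) :
    ∃ lt : B → B → Prop, IsStrictTotalOrder B lt ∧
      crossNum3 u v w Adj lt
        ≤ kuv * (kuv - 1) / 2 + kvw * (kvw - 1) / 2 + m := by
  obtain ⟨a, -, ha_unique⟩ := ha
  obtain ⟨lt, hlt, hmono⟩ := exists_isStrictTotalOrder_monotone fun b => nbhdRank u v w (Adj b)
  refine ⟨lt, hlt, ?_⟩
  rw [hkuv, hkvw, hm, ← Nat.choose_two_right, ← Nat.choose_two_right]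
  exact crossNum3_le_of_crossing_cases a fun s t x y hs ht hst hyx =>
    crossing_cases_of_monotone_nbhdRank huv huw hvw hsub hdeg ha_unique hmono hs ht hst hyx

/-- If every bottom vertex is adjacent to at most two of the top vertices
`u, v, w` and exactly one bottom vertex `a` has `Adj a = {u, w}`, then there is a
linear order on the bottom layer with at most
`k_uv·(k_uv−1)/2 + k_vw·(k_vw−1)/2 + m` crossings. -/
theorem stmt6 {T B : Type} [Fintype B] (u v w : T)
    (huv : u ≠ v) (huw : u ≠ w) (hvw : v ≠ w)
    (Adj : B → Set T) (hsub : ∀ b, Adj b ⊆ {u, v, w})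
    (hne : ∀ b, (Adj b).Nonempty) (hdeg : ∀ b, (Adj b).ncard ≤ 2)
    (ha : ∃! a : B, Adj a = {u, w})
    (kuv kvw m : ℕ)
    (hkuv : kuv = {b : B | Adj b = {u, v}}.ncard)
    (hkvw : kvw = {b : B | Adj b = {v, w}}.ncard)
    (hm : m = {b : B | v ∈ Adj b}.ncard) :
    ∃ lt : B → B → Prop, IsStrictTotalOrder B lt ∧
      crossNum3 u v w Adj lt
        ≤ kuv * (kuv - 1) / 2 + kvw * (kvw - 1) / 2 + m :=
  stmt6_general u v w huv huw hvw Adj hsub hdeg ha kuv kvw m hkuv hkvw hm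
end

section
/- There exist a finite bottom set B, an adjacency function Adj assigning to each b ∈ B a nonempty subset Adj(b) ⊆ {u,v,w}, and a red-candidate function In assigning to each b ∈ B a nonempty subset In(b) ⊆ Adj(b), such that for every linear order ≺ on B and every red-edge selection r (r(b) ∈ In(b) for all b) for which ≺ satisfies the red-edge constraint, cr(≺) is strictly greater than the minimum of cr(≺') over all linear orders ≺' on B. (This is Theorem 2: there exists an AF with an extension of size 3 for which solving AFCrossMinREC results in more edge crossings than solving AFCrossMin.) -/
/-- The red-edge constraint for a red-edge selection `r` in a 3-top-vertex
drawing: no two red edges cross. -/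
def REC3 {T B : Type} (u v w : T) (r : B → T) (lt : B → B → Prop) : Prop :=
  ∀ a b : B, a ≠ b →
    ¬ ((Above u v w (r a) (r b) ∧ lt b a) ∨ (Above u v w (r b) (r a) ∧ lt a b))

/-! Two bottom vertices suffice: `false`, adjacent to `u` and `w` with red candidate `w`, and
`true`, adjacent to `v` and `w` with red candidate `v`. As `v` is above `w`, the red edges force
`true ≺ false`, and then both edges of `true` cross `(u, false)`: two crossings. The other
order has the single crossing of `(v, true)` with `(w, false)`. -/

section Gadget

variable {T : Type}

theorem REC3.not_lt_of_above {B : Type} {u v w : T} {r : B → T} {lt : B → B → Prop}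
    (h : REC3 u v w r lt) {a b : B} (hne : a ≠ b) (hab : Above u v w (r a) (r b)) :
    ¬ lt b a :=
  fun hba => h a b hne (Or.inl ⟨hab, hba⟩)

theorem Bool.eq_gt_of_isStrictTotalOrder {lt : Bool → Bool → Prop}
    (h : IsStrictTotalOrder Bool lt) (htf : lt true false) : lt = (· > ·) := by
  have hft : ¬ lt false true := asymm htf
  funext a b
  cases a <;> cases b <;> simp [irrefl_of lt, htf, hft]

def gadgetAdj (u v w : T) : Bool → Set T := fun b => cond b {v, w} {u, w}

theorem crossNum3_gadgetAdj_lt {u v w : T} (huv : u ≠ v) (huw : u ≠ w) :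
    crossNum3 u v w (gadgetAdj u v w) (· < ·) = 1 := by
  rw [crossNum3, ← Set.ncard_singleton ((v, true), (w, false))]
  congr 1
  ext ⟨⟨s, a⟩, ⟨t, b⟩⟩
  cases a <;> cases b <;>
    simp +decide only [gadgetAdj, Above, Set.mem_ofPred_eq, Set.mem_insert_iff,
      Set.mem_singleton_iff, Prod.mk.injEq, cond_true, cond_false] <;> grind

theorem crossNum3_gadgetAdj_gt {u v w : T} (hvw : v ≠ w) :
    crossNum3 u v w (gadgetAdj u v w) (· > ·) = 2 := by
  rw [crossNum3, ← Set.ncard_pair (a := ((u, false), (v, true))) (b := ((u, false), (w, true)))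
    (by simp [hvw])]
  congr 1
  ext ⟨⟨s, a⟩, ⟨t, b⟩⟩
  cases a <;> cases b <;>
    simp +decide only [gadgetAdj, Above, Set.mem_ofPred_eq, Set.mem_insert_iff,
      Set.mem_singleton_iff, Prod.mk.injEq, cond_true, cond_false] <;> grind

end Gadget

/-- Theorem 2: there exists an AF with an extension of size 3 (modelled by the
top vertices `u`, `v`, `w`, a bottom set `B`, an adjacency function `Adj` and a
red-candidate function `In`) for which solving AFCrossMinREC results in strictly
more edge crossings than solving AFCrossMin: every order admitting a red-edge
selection that satisfies the red-edge constraint has strictly more crossings than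
the minimum over all orders. -/
theorem stmt8 {T : Type} (u v w : T)
    (huv : u ≠ v) (huw : u ≠ w) (hvw : v ≠ w) :
    ∃ (B : Type) (_ : Fintype B) (Adj Inc : B → Set T),
      (∀ b, Adj b ⊆ {u, v, w}) ∧ (∀ b, (Adj b).Nonempty) ∧
      (∀ b, Inc b ⊆ Adj b) ∧ (∀ b, (Inc b).Nonempty) ∧
      ∀ lt : B → B → Prop, IsStrictTotalOrder B lt →
        ∀ r : B → T, (∀ b, r b ∈ Inc b) → REC3 u v w r lt →
          crossNum3 u v w Adj lt >
            sInf {n : ℕ | ∃ lt' : B → B → Prop, IsStrictTotalOrder B lt' ∧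
              crossNum3 u v w Adj lt' = n} := by
  refine ⟨Bool, inferInstance, gadgetAdj u v w, fun b => {cond b v w}, ?_, ?_, ?_, ?_, ?_⟩
  · rintro (_ | _) <;> simp [gadgetAdj, Set.insert_subset_iff]
  · rintro (_ | _) <;> simp [gadgetAdj]
  · rintro (_ | _) <;> simp [gadgetAdj]
  · exact fun b => Set.singleton_nonempty _
  intro lt hlt r hr hrec
  have hr : r = fun b => cond b v w := funext hr
  subst hr
  have htf : lt true false := by
    rcases trichotomous_of lt true false with h | h | h
    · exact h
    · exact absurd h (by decide)
    · exact absurd h (hrec.not_lt_of_above (by decide) (Or.inr (Or.inr ⟨rfl, rfl⟩)))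
  rw [Bool.eq_gt_of_isStrictTotalOrder hlt htf, crossNum3_gadgetAdj_gt hvw]
  calc sInf _ ≤ 1 :=
        Nat.sInf_le (by exact ⟨(· < ·), inferInstance, crossNum3_gadgetAdj_lt huv huw⟩)
    _ < 2 := one_lt_two
end

section
/- Let n be an odd positive integer and let F = (A, R) be the argumentation framework whose arguments are A = ZMod n and whose attack relation is R = {(i, i+1) : i ∈ ZMod n} (a directed cycle of odd length n). Then the only admissible subset of A is the empty set; consequently, the only complete extension of F is the empty set. In particular, no argument lying on an isolated odd-length attack cycle can belong to any complete extension. -/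
/-- A set `E` is conflict-free w.r.t. the attack relation `R`. -/
def ConflictFree {A : Type} (R : A → A → Prop) (E : Set A) : Prop :=
  ∀ x ∈ E, ∀ y ∈ E, ¬ R x y

/-- `E` defends the argument `x`: every attacker of `x` is attacked by `E`. -/
def Defends {A : Type} (R : A → A → Prop) (E : Set A) (x : A) : Prop :=
  ∀ y, R y x → ∃ z ∈ E, R z y

/-- `E` is admissible: conflict-free and defends every element of `E`. -/
def Admissible {A : Type} (R : A → A → Prop) (E : Set A) : Prop :=
  ConflictFree R E ∧ ∀ x ∈ E, Defends R E x

/-- `E` is a complete extension: admissible and containing every argument it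
defends. -/
def Complete {A : Type} (R : A → A → Prop) (E : Set A) : Prop :=
  Admissible R E ∧ ∀ x, Defends R E x → x ∈ E

/-- In the AF that is a directed attack cycle of odd length `n` (arguments
`ZMod n`, attacks `i → i+1`), the only admissible set is the empty set;
consequently the only complete extension is the empty set. -/
theorem stmt10 (n : ℕ) (hodd : Odd n) (hpos : 0 < n) :
    (∀ E : Set (ZMod n),
        Admissible (fun i j : ZMod n => j = i + 1) E → E = ∅) ∧
    (∀ E : Set (ZMod n),
        Complete (fun i j : ZMod n => j = i + 1) E ↔ E = ∅) := by

  have key : ∀ E : Set (ZMod n),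
      Admissible (fun i j : ZMod n => j = i + 1) E → E = ∅ := by
    intro E hE
    by_contra hne
    obtain ⟨x, hx⟩ := Set.nonempty_iff_ne_empty.mpr hne
    have step : ∀ k : ℕ, x - 2 * (k : ZMod n) ∈ E := by
      intro k
      induction k with
      | zero => simpa using hx
      | succ k ih =>
        have hdef := hE.2 _ ih (x - 2 * (k : ZMod n) - 1) (by ring)
        obtain ⟨z, hz, hzeq⟩ := hdef
        have : z = x - 2 * ((k : ZMod n) + 1) := by
          have : z = x - 2 * (k : ZMod n) - 2 := by linear_combination -hzeq
          rw [this]; ring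
        rw [this] at hz
        simpa using hz
    obtain ⟨m, hm⟩ := hodd
    have h1 : x - 2 * ((m + 1 : ℕ) : ZMod n) ∈ E := step (m + 1)
    have hcast : (2 : ZMod n) * ((m + 1 : ℕ) : ZMod n) = 1 := by
      have : ((n : ZMod n)) = 0 := ZMod.natCast_self n
      push_cast
      have hn : ((2 : ZMod n) * ((m : ZMod n) + 1)) = (n : ZMod n) + 1 := by
        rw [hm]; push_cast; ring
      rw [hn, this, zero_add]
    rw [hcast] at h1
    exact hE.1 _ h1 _ hx (by ring)
  refine ⟨key, fun E => ⟨fun hC => key E hC.1, ?_⟩⟩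
  rintro rfl
  refine ⟨⟨fun x hx => hx.elim, fun x hx => hx.elim⟩, ?_⟩
  intro x hdef
  obtain ⟨z, hz, _⟩ := hdef (x - 1) (by ring)
  exact hz.elim
end
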